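/- A family of parallel m-lines passing through an edge (u, v) is a parallel bundle if and only if the exit direction is nondecreasing along the edge. Formally: let d > 0 and let m : ℝ → ℝ assign to each x ∈ [0, d] the slope of the ray R_x = {(t, x + t·m(x)) | t ≥ 0} in which the line entering the edge at the point at distance x from u leaves it. Then the rays R_x, x ∈ [0, d], are pairwise disjoint (for all x₁, x₂ ∈ [0, d] with x₁ ≠ x₂, R_{x₁} ∩ R_{x₂} = ∅) if and only if m is monotone nondecreasing on [0, d]. (Theorem 4.5.1) -/
import Mathlib


/-- Theorem 4.5.1: A family of parallel m-lines passing through an edge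
`(u, v)` of length `d` is a parallel bundle if and only if the exit slope is
nondecreasing along the edge: the rays
`R_x = {(t, x + t·m(x)) | t ≥ 0}` for `x ∈ [0, d]` are pairwise disjoint if
and only if `m` is monotone nondecreasing on `[0, d]`. -/
theorem parallel_bundle_iff_slope_monotone (d : ℝ) (hd : 0 < d) (m : ℝ → ℝ) :
    (∀ x₁ ∈ Set.Icc (0 : ℝ) d, ∀ x₂ ∈ Set.Icc (0 : ℝ) d, x₁ ≠ x₂ →
        {p : ℝ × ℝ | ∃ t : ℝ, 0 ≤ t ∧ p = (t, x₁ + t * m x₁)} ∩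
        {p : ℝ × ℝ | ∃ t : ℝ, 0 ≤ t ∧ p = (t, x₂ + t * m x₂)} = ∅) ↔
      MonotoneOn m (Set.Icc (0 : ℝ) d) := by
  constructor
  · intro h x₁ hx₁ x₂ hx₂ hle
    by_contra hlt
    push_neg at hlt
    have hne : x₁ ≠ x₂ := by
      rintro rfl; exact absurd le_rfl (not_le.mpr hlt)
    have hx12 : x₁ < x₂ := lt_of_le_of_ne hle hne
    have hmm : 0 < m x₁ - m x₂ := sub_pos.mpr hlt
    set t := (x₂ - x₁) / (m x₁ - m x₂) with ht
    have ht0 : 0 ≤ t := le_of_lt (div_pos (sub_pos.mpr hx12) hmm)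
    have hcancel : t * (m x₁ - m x₂) = x₂ - x₁ :=
      div_mul_cancel₀ _ (ne_of_gt hmm)
    have key : x₁ + t * m x₁ = x₂ + t * m x₂ := by
      have := hcancel
      rw [mul_sub] at this
      linarith
    have := h x₁ hx₁ x₂ hx₂ hne
    rw [Set.eq_empty_iff_forall_notMem] at this
    exact this (t, x₁ + t * m x₁)
      ⟨⟨t, ht0, rfl⟩, ⟨t, ht0, by rw [key]⟩⟩
  · intro hmono x₁ hx₁ x₂ hx₂ hne
    rw [Set.eq_empty_iff_forall_notMem]
    rintro p ⟨⟨t₁, ht₁, rfl⟩, ⟨t₂, ht₂, hp⟩⟩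
    rw [Prod.ext_iff] at hp
    obtain ⟨hteq, hyeq⟩ := hp
    simp only at hteq hyeq
    subst hteq
    rcases eq_or_lt_of_le ht₁ with rfl | ht
    · simp at hyeq; exact hne hyeq
    rcases lt_or_gt_of_ne hne with hlt | hlt
    · have := hmono hx₁ hx₂ hlt.le
      nlinarith
    · have := hmono hx₂ hx₁ hlt.le
      nlinarith
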